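/- Let C be a convex market model with ℝ^d_- ⊆ C_t a.s. Then C has the no-arbitrage property A_T(C) ∩ L^0_+ = {0} if and only if A(C) ∩ 𝒜_+ = {0}, where 𝒜_+ denotes the adapted processes with values in ℝ^d_+ a.s. -/

import Mathlib

/-!
Both properties say that nothing nonnegative and nonzero can be obtained for free; they differ
only in bookkeeping. A consumption plan `c` hedged by positions `x` with `x T = 0` yields the
attainable claim `∑ₜ (xₜ - xₜ₋₁ + cₜ) = ∑ₜ cₜ`, which is nonnegative and, under no-arbitrage, zero,
so every `cₜ ≥ 0` vanishes. Conversely, an attainable claim `∑ₜ wₜ` is the terminal consumption of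
the plan whose positions are the running sums of the trades `wₜ`, liquidated at time `T`.
-/

open MeasureTheory Finset

section Telescoping

variable {M : Type*} [AddCommGroup M]

theorem sum_range_sub_prev (x : ℕ → M) (T : ℕ) :
    ∑ t ∈ range (T + 1), (x t - if t = 0 then 0 else x (t - 1)) = x T := by
  simpa using sum_range_sub (fun t => if t = 0 then (0 : M) else x (t - 1)) (T + 1)

theorem sum_range_sub_prev_add (x c : ℕ → M) (T : ℕ) :
    ∑ t ∈ range (T + 1), (x t - (if t = 0 then 0 else x (t - 1)) + c t) =
      x T + ∑ t ∈ range (T + 1), c t := by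
  rw [sum_add_distrib, sum_range_sub_prev]

theorem sum_range_succ_sub_prev (w : ℕ → M) (t : ℕ) :
    ∑ s ∈ range (t + 1), w s - (if t = 0 then 0 else ∑ s ∈ range (t - 1 + 1), w s) = w t := by
  cases t with
  | zero => simp
  | succ t => simp [sum_range_succ _ (t + 1)]

def partialSumBefore (w : ℕ → M) (T t : ℕ) : M :=
  if t < T then ∑ s ∈ range (t + 1), w s else 0

def totalAt (w : ℕ → M) (T t : ℕ) : M :=
  if t = T then ∑ s ∈ range (T + 1), w s else 0

@[simp]
theorem partialSumBefore_self (w : ℕ → M) (T : ℕ) : partialSumBefore w T T = 0 := by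
  simp [partialSumBefore]

@[simp]
theorem totalAt_self (w : ℕ → M) (T : ℕ) : totalAt w T T = ∑ s ∈ range (T + 1), w s := by
  simp [totalAt]

theorem partialSumBefore_sub_prev_add_totalAt (w : ℕ → M) {T t : ℕ} (ht : t ≤ T) :
    partialSumBefore w T t - (if t = 0 then 0 else partialSumBefore w T (t - 1)) +
      totalAt w T t = w t := by
  have hsum : partialSumBefore w T t + totalAt w T t = ∑ s ∈ range (t + 1), w s := by
    rcases ht.lt_or_eq with ht | rfl
    · simp [partialSumBefore, totalAt, ht, ht.ne]
    · simp
  have hprev : (if t = 0 then 0 else partialSumBefore w T (t - 1)) =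
      if t = 0 then 0 else ∑ s ∈ range (t - 1 + 1), w s := by
    split_ifs with h0
    · rfl
    · simp [partialSumBefore, show t - 1 < T by omega]
  rw [sub_add_eq_add_sub, hsum, hprev, sum_range_succ_sub_prev]

end Telescoping

section Adapted

variable {Ω E : Type*} [MeasurableSpace E] [AddCommGroup E] {F : ℕ → MeasurableSpace Ω}

theorem measurable_sum_range_of_monotone [MeasurableAdd₂ E] (hF : Monotone F)
    {w : ℕ → Ω → E} (hw : ∀ t, Measurable[F t] (w t)) (t : ℕ) :
    Measurable[F t] fun ω => ∑ s ∈ range (t + 1), w s ω :=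
  Finset.measurable_sum _ fun s hs =>
    (hw s).mono (hF (Nat.lt_succ_iff.mp (mem_range.mp hs))) le_rfl

theorem measurable_partialSumBefore [MeasurableAdd₂ E] (hF : Monotone F)
    {w : ℕ → Ω → E} (hw : ∀ t, Measurable[F t] (w t)) (T t : ℕ) :
    Measurable[F t] fun ω => partialSumBefore (w · ω) T t := by
  unfold partialSumBefore
  split_ifs
  · exact measurable_sum_range_of_monotone hF hw t
  · exact measurable_const

theorem measurable_totalAt [MeasurableAdd₂ E] (hF : Monotone F)
    {w : ℕ → Ω → E} (hw : ∀ t, Measurable[F t] (w t)) (T t : ℕ) :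
    Measurable[F t] fun ω => totalAt (w · ω) T t := by
  unfold totalAt
  split_ifs with h
  · subst h
    exact measurable_sum_range_of_monotone hF hw t
  · exact measurable_const

theorem measurable_sub_prev_add [MeasurableAdd₂ E] [MeasurableSub₂ E] (hF : Monotone F)
    {x c : ℕ → Ω → E} (hx : ∀ t, Measurable[F t] (x t)) (hc : ∀ t, Measurable[F t] (c t))
    (t : ℕ) :
    Measurable[F t] fun ω => x t ω - (if t = 0 then 0 else x (t - 1) ω) + c t ω := by
  cases t with
  | zero =>
    simp only [↓reduceIte, sub_zero]
    exact (hx 0).add (hc 0)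
  | succ t =>
    simp only [Nat.add_one_ne_zero, ↓reduceIte, Nat.add_sub_cancel]
    exact ((hx _).sub ((hx t).mono (hF t.le_succ) le_rfl)).add (hc _)

end Adapted

section Positivity

variable {Ω E : Type*} [MeasurableSpace Ω] {μ : Measure Ω} {T : ℕ}

theorem ae_forall_mem_range_of_forall_le {p : ℕ → Ω → Prop} (h : ∀ t ≤ T, ∀ᵐ ω ∂μ, p t ω) :
    ∀ᵐ ω ∂μ, ∀ t ∈ range (T + 1), p t ω :=
  (Filter.eventually_all_finset _).2 fun t ht => h t (Nat.lt_succ_iff.mp (mem_range.mp ht))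

variable [AddCommMonoid E] [PartialOrder E] [IsOrderedAddMonoid E] {c : ℕ → Ω → E}

theorem ae_sum_range_nonneg (hc : ∀ t ≤ T, ∀ᵐ ω ∂μ, 0 ≤ c t ω) :
    ∀ᵐ ω ∂μ, 0 ≤ ∑ t ∈ range (T + 1), c t ω := by
  filter_upwards [ae_forall_mem_range_of_forall_le hc] with ω hω
  exact sum_nonneg hω

theorem ae_eq_zero_of_sum_range_eq_zero (hc : ∀ t ≤ T, ∀ᵐ ω ∂μ, 0 ≤ c t ω)
    (hsum : ∀ᵐ ω ∂μ, ∑ t ∈ range (T + 1), c t ω = 0) :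
    ∀ t ≤ T, ∀ᵐ ω ∂μ, c t ω = 0 := by
  intro t ht
  filter_upwards [hsum, ae_forall_mem_range_of_forall_le hc] with ω hsum hpos
  exact (sum_eq_zero_iff_of_nonneg hpos).mp hsum t (mem_range.mpr (Nat.lt_succ_of_le ht))

end Positivity

theorem no_arbitrage_iff_general {Ω : Type*} [m0 : MeasurableSpace Ω]
    (P : Measure Ω) (d T : ℕ)
    (F : ℕ → MeasurableSpace Ω) (hmono : ∀ s t, s ≤ t → F s ≤ F t)
    (C : ℕ → Ω → Set (Fin d → ℝ)) :
    -- A_T(C) ∩ L⁰₊ = {0}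
    ((∀ g : Ω → Fin d → ℝ,
        (∃ w : ℕ → Ω → Fin d → ℝ, (∀ t, Measurable[F t] (w t)) ∧
          (∀ t ≤ T, ∀ᵐ ω ∂P, w t ω ∈ C t ω) ∧
          (∀ᵐ ω ∂P, g ω = ∑ t ∈ range (T + 1), w t ω)) →
        (∀ᵐ ω ∂P, ∀ i, 0 ≤ g ω i) →
        (∀ᵐ ω ∂P, g ω = 0)) ↔
    -- A(C) ∩ 𝒜₊ = {0}
      (∀ c : ℕ → Ω → Fin d → ℝ, (∀ t, Measurable[F t] (c t)) →
        (∃ x : ℕ → Ω → Fin d → ℝ, (∀ t, Measurable[F t] (x t)) ∧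
          (∀ᵐ ω ∂P, x T ω = 0) ∧
          (∀ t ≤ T, ∀ᵐ ω ∂P,
            x t ω - (if t = 0 then 0 else x (t - 1) ω) + c t ω ∈ C t ω)) →
        (∀ t ≤ T, ∀ᵐ ω ∂P, ∀ i, 0 ≤ c t ω i) →
        (∀ t ≤ T, ∀ᵐ ω ∂P, c t ω = 0))) := by
  have hF : Monotone F := fun s t => hmono s t
  constructor
  · rintro hNA c hc ⟨x, hx, hxT, hxC⟩ hcpos
    refine ae_eq_zero_of_sum_range_eq_zero hcpos (hNA (fun ω => ∑ t ∈ range (T + 1), c t ω)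
      ⟨_, measurable_sub_prev_add hF hx hc, hxC, ?_⟩ (ae_sum_range_nonneg hcpos :
        ∀ᵐ ω ∂P, 0 ≤ ∑ t ∈ range (T + 1), c t ω))
    filter_upwards [hxT] with ω hω
    rw [sum_range_sub_prev_add (x · ω) (c · ω), hω, zero_add]
  · rintro hA g ⟨w, hw, hwC, hg⟩ hgpos
    have hcpos : ∀ t ≤ T, ∀ᵐ ω ∂P, 0 ≤ totalAt (w · ω) T t := by
      intro t _
      by_cases htT : t = T
      · filter_upwards [hgpos, hg] with ω hpos hgω
        rw [htT, totalAt_self, ← hgω]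
        exact hpos
      · exact ae_of_all _ fun ω => by simp [totalAt, htT]
    have hc0 := hA _ (measurable_totalAt hF hw T) ⟨_, measurable_partialSumBefore hF hw T,
      ae_of_all _ fun ω => partialSumBefore_self _ T, fun t ht => by
        filter_upwards [hwC t ht] with ω hω
        rwa [partialSumBefore_sub_prev_add_totalAt (w · ω) ht]⟩ hcpos T le_rfl
    filter_upwards [hc0, hg] with ω hω hgω
    rwa [totalAt_self, ← hgω] at hω

/-- The no-arbitrage property `A_T(C) ∩ L⁰₊ = {0}` holds iff `A(C) ∩ 𝒜₊ = {0}`. -/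
theorem no_arbitrage_iff {Ω : Type*} [m0 : MeasurableSpace Ω]
    (P : Measure Ω) [IsProbabilityMeasure P] (d T : ℕ)
    (F : ℕ → MeasurableSpace Ω) (hF : ∀ t, F t ≤ m0) (hmono : ∀ s t, s ≤ t → F s ≤ F t)
    (C : ℕ → Ω → Set (Fin d → ℝ))
    (hCneg : ∀ t, ∀ ω, {v : Fin d → ℝ | ∀ i, v i ≤ 0} ⊆ C t ω)
    (hCclosed : ∀ t ω, IsClosed (C t ω)) (hCconv : ∀ t ω, Convex ℝ (C t ω)) :
    -- A_T(C) ∩ L⁰₊ = {0}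
    ((∀ g : Ω → Fin d → ℝ,
        (∃ w : ℕ → Ω → Fin d → ℝ, (∀ t, Measurable[F t] (w t)) ∧
          (∀ t ≤ T, ∀ᵐ ω ∂P, w t ω ∈ C t ω) ∧
          (∀ᵐ ω ∂P, g ω = ∑ t ∈ range (T + 1), w t ω)) →
        (∀ᵐ ω ∂P, ∀ i, 0 ≤ g ω i) →
        (∀ᵐ ω ∂P, g ω = 0)) ↔
    -- A(C) ∩ 𝒜₊ = {0}
      (∀ c : ℕ → Ω → Fin d → ℝ, (∀ t, Measurable[F t] (c t)) →
        (∃ x : ℕ → Ω → Fin d → ℝ, (∀ t, Measurable[F t] (x t)) ∧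
          (∀ᵐ ω ∂P, x T ω = 0) ∧
          (∀ t ≤ T, ∀ᵐ ω ∂P,
            x t ω - (if t = 0 then 0 else x (t - 1) ω) + c t ω ∈ C t ω)) →
        (∀ t ≤ T, ∀ᵐ ω ∂P, ∀ i, 0 ≤ c t ω i) →
        (∀ t ≤ T, ∀ᵐ ω ∂P, c t ω = 0))) :=
  no_arbitrage_iff_general (m0 := m0) P d T F hmono C
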